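/- There exists a feasible single-item reduced form for independent bidders that cannot be implemented by any distribution over virtually-ordered hierarchical mechanisms. Concretely: bidder 1 has a single type A; bidder 2 has types B and C each with probability 1/2; the reduced form π_1(A)=1/3, π_2(B)=2/3+ε, π_2(C)=2/3−ε (for small ε>0) is feasible, but \hat{π}_1(A) > \hat{π}_2(C), so any distribution over virtually-ordered hierarchical mechanisms gives C the item with probability at most 1/2 < 2/3 − ε. -/

import Mathlib

/- Feasibility is witnessed by giving A the item with probability 1/3 − ε against B and
1/3 + ε against C. For the impossibility, π̂₂(C) = 1/3 − ε/2 < 1/3 = π̂₁(A), so every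
virtually-ordered hierarchical mechanism ranks A weakly above C; then C wins with
probability at most 1/2 (only through a tie), and so does any mixture, while the reduced
form asks for 2/3 − ε > 1/2. -/

/- Two independent bidders, single item. Bidder 1 has the single type A (`Sum.inl ()`);
bidder 2 has types B (`Sum.inr true`) and C (`Sum.inr false`), each with probability
1/2.  Reduced form: π₁(A) = 1/3, π₂(B) = 2/3 + ε, π₂(C) = 2/3 − ε. -/

/-- The virtual reduced form values: π̂₁(A) = 1/3, π̂₂(B) = 2/3 + ε,
π̂₂(C) = (1/2)·(2/3 − ε) = 1/3 − ε/2. -/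
noncomputable def hatEx (ε : ℝ) : Unit ⊕ Bool → ℝ
  | Sum.inl _ => 1/3
  | Sum.inr true => 2/3 + ε
  | Sum.inr false => 1/3 - ε/2

/-- Probability bidder 1 (type A) gets the item under hierarchical mechanism `H`, given
bidder 2 reports `t`. -/
noncomputable def alloc1of (H : Unit ⊕ Bool → ℕ∞) (t : Bool) : ℝ :=
  if H (Sum.inl ()) = ⊤ then 0
  else if H (Sum.inl ()) < H (Sum.inr t) then 1
  else if H (Sum.inl ()) = H (Sum.inr t) then 1/2
  else 0

/-- Probability bidder 2 reporting `t` gets the item under hierarchical mechanism `H`. -/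
noncomputable def alloc2of (H : Unit ⊕ Bool → ℕ∞) (t : Bool) : ℝ :=
  if H (Sum.inr t) = ⊤ then 0
  else if H (Sum.inr t) < H (Sum.inl ()) then 1
  else if H (Sum.inr t) = H (Sum.inl ()) then 1/2
  else 0

/-- Interim probability that bidder 1 gets the item under `H` (bidder 2's type is
uniform on `Bool`). -/
noncomputable def interim1of (H : Unit ⊕ Bool → ℕ∞) : ℝ :=
  ∑ t : Bool, (1/2 : ℝ) * alloc1of H t

theorem reducedForm_feasible {ε : ℝ} (hε : |ε| ≤ 1/3) :
    ∃ φ₁ φ₂ : Bool → ℝ,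
      (∀ t, 0 ≤ φ₁ t) ∧ (∀ t, 0 ≤ φ₂ t) ∧ (∀ t, φ₁ t + φ₂ t ≤ 1) ∧
      ((1/2 : ℝ) * φ₁ true + (1/2 : ℝ) * φ₁ false = 1/3) ∧
      (φ₂ true = 2/3 + ε) ∧ (φ₂ false = 2/3 - ε) := by
  obtain ⟨hlo, hhi⟩ := abs_le.mp hε
  refine ⟨fun t => if t then 1/3 - ε else 1/3 + ε, fun t => if t then 2/3 + ε else 2/3 - ε,
    ?_, ?_, ?_, by norm_num; ring, rfl, rfl⟩ <;>
  · intro t; cases t <;> simp only [Bool.false_eq_true, if_true, if_false] <;> linarith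

theorem hatEx_inr_false_le_inl {ε : ℝ} (hε : 0 ≤ ε) :
    hatEx ε (Sum.inr false) ≤ hatEx ε (Sum.inl ()) := by
  simp only [hatEx]
  linarith

theorem alloc2of_le_half {H : Unit ⊕ Bool → ℕ∞} {t : Bool}
    (h : H (Sum.inl ()) ≤ H (Sum.inr t)) : alloc2of H t ≤ 1/2 := by
  unfold alloc2of
  split_ifs with _ hlt
  · norm_num
  · exact absurd hlt (not_lt.mpr h)
  all_goals norm_num

theorem weighted_sum_le {ι : Type*} {s : Finset ι} {w f : ι → ℝ} {c : ℝ}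
    (hw : ∀ i ∈ s, 0 ≤ w i) (hsum : ∑ i ∈ s, w i = 1) (hf : ∀ i ∈ s, f i ≤ c) :
    ∑ i ∈ s, w i * f i ≤ c :=
  calc ∑ i ∈ s, w i * f i ≤ ∑ i ∈ s, w i * c :=
        Finset.sum_le_sum fun i hi => mul_le_mul_of_nonneg_left (hf i hi) (hw i hi)
    _ = c := by rw [← Finset.sum_mul, hsum, one_mul]

/-- There exists a feasible single-item reduced form for independent bidders that cannot
be implemented by any distribution over virtually-ordered hierarchical mechanisms
(`π̂_i(A) ≥ π̂_j(A') → H(A,i) ≤ H(A',j)`): the concrete reduced form above is feasible,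
but no distribution over virtually-ordered hierarchical mechanisms exactly implements
it. -/
theorem stmt_11 (ε : ℝ) (hε : 0 < ε) (hε' : ε < 1/6) :
    -- the reduced form is feasible:
    (∃ φ₁ φ₂ : Bool → ℝ,
        (∀ t, 0 ≤ φ₁ t) ∧ (∀ t, 0 ≤ φ₂ t) ∧ (∀ t, φ₁ t + φ₂ t ≤ 1) ∧
        ((1/2 : ℝ) * φ₁ true + (1/2 : ℝ) * φ₁ false = 1/3) ∧
        (φ₂ true = 2/3 + ε) ∧ (φ₂ false = 2/3 - ε)) ∧
    -- but no distribution over virtually-ordered hierarchical mechanisms implements it: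
    ¬ ∃ (k : ℕ) (Hs : Fin k → (Unit ⊕ Bool → ℕ∞)) (w : Fin k → ℝ),
        (∀ l, 0 ≤ w l) ∧ (∑ l, w l = 1) ∧
        (∀ l (s t : Unit ⊕ Bool), hatEx ε t ≤ hatEx ε s → Hs l s ≤ Hs l t) ∧
        (∑ l, w l * interim1of (Hs l) = 1/3) ∧
        (∀ t : Bool, (∑ l, w l * alloc2of (Hs l) t)
            = if t then 2/3 + ε else 2/3 - ε) := by
  refine ⟨reducedForm_feasible (abs_le.mpr ⟨by linarith, by linarith⟩), ?_⟩
  rintro ⟨k, Hs, w, hw, hsum, hord, -, hC⟩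
  have hC_le : ∑ l, w l * alloc2of (Hs l) false ≤ 1/2 :=
    weighted_sum_le (fun l _ => hw l) hsum fun l _ =>
      alloc2of_le_half (hord l _ _ (hatEx_inr_false_le_inl hε.le))
  rw [hC false, if_neg Bool.false_ne_true] at hC_le
  linarith
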